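/- Decomposition of the C_L quantum information of a mixture (identity): In the multi-parameter spectral-family setup, define the p×p real matrices (F(p)(θ))_{kl} = Σ_{i: p_i>0} p_i^{(k)} p_i^{(l)}/p_i (the classical Fisher information of the eigenvalue distribution) and, for each i, (H(ρ_i)(θ))_{kl} = 4( Re⟨w_i^{(k)}(θ), w_i^{(l)}(θ)⟩ − ⟨w_i^{(k)}(θ), w_i(θ)⟩⟨w_i(θ), w_i^{(l)}(θ)⟩ ) (the SLD quantum information of the pure family ρ_i(θ) = |w_i(θ)⟩⟨w_i(θ)|). Then C_L(θ) = F(p)(θ) + Σ_{i=1}^d p_i(θ) · H(ρ_i)(θ). -/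

import Mathlib

/-!
Differentiating `⟨w_i, w_j⟩ = δ_ij` shows that the matrix `⟨∂_k w_i, w_j⟩` is anti-Hermitian, so
the real part of the summand `⟨∂_k w_i, w_j⟩⟨w_j, ∂_l w_i⟩` of `C_L` is symmetric in `(i, j)`.
Hence the sum over pairs `i < j` weighted by `p_i + p_j` equals `Σ_i p_i Σ_{j ≠ i}`. By Parseval
in the basis `w`, `Σ_j ⟨∂_k w_i, w_j⟩⟨w_j, ∂_l w_i⟩ = ⟨∂_k w_i, ∂_l w_i⟩`, and dropping the term
`j = i` leaves exactly `H(ρ_i)_{kl} / 4`.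
-/

open scoped BigOperators

noncomputable section

/-- The Hermitian inner product on `Fin d → ℂ`, conjugate-linear in the first argument. -/
def inn {d : ℕ} (x y : Fin d → ℂ) : ℂ := ∑ i, (starRingEnd ℂ) (x i) * y i

section PairSums
variable {ι : Type*} [Fintype ι] [LinearOrder ι]

theorem sum_sum_ite_lt_add_swap {M : Type*} [AddCommMonoid M] (f : ι → ι → M) :
    ∑ i, ∑ j, (if i < j then f i j + f j i else 0) = ∑ i, ∑ j, if i ≠ j then f i j else 0 := by
  have hsplit : ∀ i j, (if i < j then f i j + f j i else 0)
      = (if i < j then f i j else 0) + if i < j then f j i else 0 := by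
    intro i j; split_ifs <;> simp
  simp only [hsplit, Finset.sum_add_distrib]
  rw [Finset.sum_comm (f := fun i j => if i < j then f j i else 0), ← Finset.sum_add_distrib]
  refine Finset.sum_congr rfl fun i _ => ?_
  rw [← Finset.sum_add_distrib]
  refine Finset.sum_congr rfl fun j _ => ?_
  rcases lt_trichotomy i j with h | rfl | h
  · simp [h, h.ne, h.not_gt]
  · simp
  · simp [h, h.ne', h.not_gt]

theorem sum_sum_ite_lt_pos_add_mul {q : ι → ℝ} (hq : ∀ i, 0 ≤ q i) {B : ι → ι → ℝ}
    (hB : ∀ i j, B j i = B i j) :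
    ∑ i, ∑ j, (if i < j ∧ 0 < q i + q j then (q i + q j) * B i j else 0)
      = ∑ i, q i * (∑ j, B i j - B i i) := by
  have hpos : ∀ i j, (if i < j ∧ 0 < q i + q j then (q i + q j) * B i j else 0)
      = if i < j then q i * B i j + q j * B j i else 0 := by
    intro i j
    by_cases hij : i < j
    · rcases (add_nonneg (hq i) (hq j)).lt_or_eq with h | h
      · simp [hij, h, hB i j, add_mul]
      · have hi : q i = 0 := by linarith [hq i, hq j]
        have hj : q j = 0 := by linarith [hq i, hq j]
        simp [hi, hj]
    · simp [hij]
  simp only [hpos, sum_sum_ite_lt_add_swap (fun i j => q i * B i j)]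
  refine Finset.sum_congr rfl fun i _ => ?_
  rw [← Finset.sum_erase_eq_sub (Finset.mem_univ i), Finset.mul_sum, Finset.sum_ite,
    Finset.sum_const_zero, add_zero]
  congr 1
  ext j; simp [eq_comm]

end PairSums

section Inn
variable {d : ℕ}

theorem inn_eq_inner (x y : Fin d → ℂ) :
    inn x y = inner ℂ (WithLp.toLp 2 x : EuclideanSpace ℂ (Fin d)) (WithLp.toLp 2 y) := by
  simp [inn, PiLp.inner_apply, mul_comm]

theorem conj_inn (x y : Fin d → ℂ) : starRingEnd ℂ (inn x y) = inn y x := by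
  simp only [inn_eq_inner, inner_conj_symm]

theorem sum_inn_mul_inn_of_orthonormal {w : Fin d → Fin d → ℂ}
    (hw : ∀ i j, inn (w i) (w j) = if i = j then 1 else 0) (x y : Fin d → ℂ) :
    ∑ j, inn x (w j) * inn (w j) y = inn x y := by
  have hon : Orthonormal ℂ fun j => (WithLp.toLp 2 (w j) : EuclideanSpace ℂ (Fin d)) :=
    orthonormal_iff_ite.2 fun i j => by rw [← inn_eq_inner, hw]
  have hspan := hon.linearIndependent.span_eq_top_of_card_eq_finrank' (by simp)
  simpa only [inn_eq_inner, OrthonormalBasis.coe_mk] using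
    (OrthonormalBasis.mk hon hspan.ge).sum_inner_mul_inner (WithLp.toLp 2 x) (WithLp.toLp 2 y)

theorem HasDerivAt.inn {f g : ℝ → Fin d → ℂ} {f' g' : Fin d → ℂ} {t : ℝ}
    (hf : HasDerivAt f f' t) (hg : HasDerivAt g g' t) :
    HasDerivAt (fun s => inn (f s) (g s)) (inn (f t) g' + inn f' (g t)) t := by
  simp only [inn_eq_inner]
  exact ((PiLp.continuousLinearEquiv 2 ℝ _).symm.hasFDerivAt.comp_hasDerivAt t hf).inner ℂ
    ((PiLp.continuousLinearEquiv 2 ℝ _).symm.hasFDerivAt.comp_hasDerivAt t hg)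

theorem inn_add_inn_eq_zero_of_inn_const {f g : ℝ → Fin d → ℂ} {f' g' : Fin d → ℂ} {t : ℝ}
    (hf : HasDerivAt f f' t) (hg : HasDerivAt g g' t) {c : ℂ} (hc : ∀ s, inn (f s) (g s) = c) :
    inn (f t) g' + inn f' (g t) = 0 :=
  (hf.inn hg).unique (by simpa only [hc] using hasDerivAt_const t c)

/-- Here `u = ∂_k w` and `v = ∂_l w` for an orthonormal basis `w`, so that `hu` and `hv` are the
derivatives of the orthonormality relations. -/
theorem re_sum_pairs_eq_sum_mul {w u v : Fin d → Fin d → ℂ}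
    (hw : ∀ i j, inn (w i) (w j) = if i = j then 1 else 0)
    (hu : ∀ i j, inn (w i) (u j) + inn (u i) (w j) = 0)
    (hv : ∀ i j, inn (w i) (v j) + inn (v i) (w j) = 0) {q : Fin d → ℝ} (hq : ∀ i, 0 ≤ q i) :
    (∑ i, ∑ j, if i < j ∧ 0 < q i + q j then
        ((q i + q j : ℝ) : ℂ) * inn (u i) (w j) * inn (w j) (v i) else 0).re
      = ∑ i, q i * ((inn (u i) (v i)).re - (inn (u i) (w i) * inn (w i) (v i)).re) := by
  set B : Fin d → Fin d → ℝ := fun i j => (inn (u i) (w j) * inn (w j) (v i)).re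
  have hB : ∀ i j, B j i = B i j := by
    intro i j
    have hconj : inn (u j) (w i) * inn (w i) (v j)
        = starRingEnd ℂ (inn (u i) (w j) * inn (w j) (v i)) := by
      rw [map_mul, conj_inn, conj_inn, eq_neg_of_add_eq_zero_right (hu j i),
        eq_neg_of_add_eq_zero_left (hv i j), neg_mul_neg]
    simp only [B, hconj, Complex.conj_re]
  have hre : (∑ i, ∑ j, if i < j ∧ 0 < q i + q j then
        ((q i + q j : ℝ) : ℂ) * inn (u i) (w j) * inn (w j) (v i) else 0).re
      = ∑ i, ∑ j, if i < j ∧ 0 < q i + q j then (q i + q j) * B i j else 0 := by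
    simp only [Complex.re_sum, apply_ite Complex.re, Complex.zero_re, mul_assoc,
      Complex.re_ofReal_mul, B]
  have hparseval : ∀ i, ∑ j, B i j = (inn (u i) (v i)).re := fun i => by
    simp only [B, ← Complex.re_sum, sum_inn_mul_inn_of_orthonormal hw]
  simp only [hre, sum_sum_ite_lt_pos_add_mul hq hB, hparseval, B]

end Inn

theorem CL_mixture_decomposition_general {d n : ℕ}
    (p : Fin d → (Fin n → ℝ) → ℝ) (w : Fin d → (Fin n → ℝ) → (Fin d → ℂ))
    (pd : Fin d → Fin n → (Fin n → ℝ) → ℝ)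
    (wd : Fin d → Fin n → (Fin n → ℝ) → (Fin d → ℂ))
    (horth : ∀ θ (i j : Fin d), inn (w i θ) (w j θ) = if i = j then 1 else 0)
    (hpnn : ∀ (i : Fin d) θ, 0 ≤ p i θ)
    (hwd : ∀ (i : Fin d) (k : Fin n) θ,
      HasDerivAt (fun t => w i (Function.update θ k t)) (wd i k θ) (θ k))
    (CL Fp : (Fin n → ℝ) → Matrix (Fin n) (Fin n) ℝ)
    (Hpure : Fin d → (Fin n → ℝ) → Matrix (Fin n) (Fin n) ℝ)
    (hCL : ∀ θ (k l : Fin n), CL θ k l =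
        (∑ i, if 0 < p i θ then pd i k θ * pd i l θ / p i θ else 0)
        + 4 * (∑ i, ∑ j, if i < j ∧ 0 < p i θ + p j θ then
            ((p i θ + p j θ : ℝ) : ℂ) * inn (wd i k θ) (w j θ) * inn (w j θ) (wd i l θ)
            else 0).re)
    (hFp : ∀ θ (k l : Fin n), Fp θ k l =
        ∑ i, if 0 < p i θ then pd i k θ * pd i l θ / p i θ else 0)
    (hHpure : ∀ (i : Fin d) θ (k l : Fin n), Hpure i θ k l =
        4 * ((inn (wd i k θ) (wd i l θ)).re -
          (inn (wd i k θ) (w i θ) * inn (w i θ) (wd i l θ)).re)) :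
    ∀ θ : Fin n → ℝ, CL θ = Fp θ + ∑ i, p i θ • Hpure i θ := by
  intro θ
  have hskew : ∀ k i j, inn (w i θ) (wd j k θ) + inn (wd i k θ) (w j θ) = 0 := fun k i j => by
    simpa only [Function.update_eq_self] using inn_add_inn_eq_zero_of_inn_const
      (hwd i k θ) (hwd j k θ) (fun t => horth (Function.update θ k t) i j)
  ext k l
  rw [hCL, re_sum_pairs_eq_sum_mul (horth θ) (hskew k) (hskew l) (hpnn · θ)]
  simp only [Matrix.add_apply, Matrix.sum_apply, Matrix.smul_apply, smul_eq_mul, hFp, hHpure,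
    Finset.mul_sum]
  congr 1
  refine Finset.sum_congr rfl fun i _ => ?_
  ring

/-- **Decomposition of the `C_L` quantum information of a mixture.**
`C_L(θ) = F(p)(θ) + Σ_i p_i(θ) · H(ρ_i)(θ)`: the `C_L` information equals the classical
Fisher information of the eigenvalue distribution plus the weighted sum of the SLD
informations of the pure eigenvector families. -/
theorem CL_mixture_decomposition {d n : ℕ} (hd : 1 ≤ d) (hn : 1 ≤ n)
    (p : Fin d → (Fin n → ℝ) → ℝ) (w : Fin d → (Fin n → ℝ) → (Fin d → ℂ))
    (pd : Fin d → Fin n → (Fin n → ℝ) → ℝ)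
    (wd : Fin d → Fin n → (Fin n → ℝ) → (Fin d → ℂ))
    (horth : ∀ θ (i j : Fin d), inn (w i θ) (w j θ) = if i = j then 1 else 0)
    (hpnn : ∀ (i : Fin d) θ, 0 ≤ p i θ) (hpsum : ∀ θ, ∑ i, p i θ = 1)
    (hpd : ∀ (i : Fin d) (k : Fin n) θ,
      HasDerivAt (fun t => p i (Function.update θ k t)) (pd i k θ) (θ k))
    (hwd : ∀ (i : Fin d) (k : Fin n) θ,
      HasDerivAt (fun t => w i (Function.update θ k t)) (wd i k θ) (θ k))
    (hpdC : ∀ i : Fin d, Continuous fun θ k => pd i k θ)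
    (hwdC : ∀ i : Fin d, Continuous fun θ k => wd i k θ)
    (hdich : ∀ i : Fin d, (∀ θ, 0 < p i θ) ∨ (∀ θ, p i θ = 0))
    (CL Fp : (Fin n → ℝ) → Matrix (Fin n) (Fin n) ℝ)
    (Hpure : Fin d → (Fin n → ℝ) → Matrix (Fin n) (Fin n) ℝ)
    (hCL : ∀ θ (k l : Fin n), CL θ k l =
        (∑ i, if 0 < p i θ then pd i k θ * pd i l θ / p i θ else 0)
        + 4 * (∑ i, ∑ j, if i < j ∧ 0 < p i θ + p j θ then
            ((p i θ + p j θ : ℝ) : ℂ) * inn (wd i k θ) (w j θ) * inn (w j θ) (wd i l θ)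
            else 0).re)
    (hFp : ∀ θ (k l : Fin n), Fp θ k l =
        ∑ i, if 0 < p i θ then pd i k θ * pd i l θ / p i θ else 0)
    (hHpure : ∀ (i : Fin d) θ (k l : Fin n), Hpure i θ k l =
        4 * ((inn (wd i k θ) (wd i l θ)).re -
          (inn (wd i k θ) (w i θ) * inn (w i θ) (wd i l θ)).re)) :
    ∀ θ : Fin n → ℝ, CL θ = Fp θ + ∑ i, p i θ • Hpure i θ :=
  CL_mixture_decomposition_general p w pd wd horth hpnn hwd CL Fp Hpure hCL hFp hHpure
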